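/- Let L be an even unimodular lattice, M ⊂ L a primitive sublattice (L/M torsion-free) with nondegenerate restricted form, and N = M^⊥ in L. Then the image of L in M^∨/M × N^∨/N under the natural map x ↦ (x_M mod M, x_N mod N) is the graph of a group isomorphism M^∨/M ≅ N^∨/N. -/

import Mathlib

/-!
Unimodularity identifies `L` with its dual, and `M` and `N = M^⊥` are primitive, hence direct
summands, so both projections `L → M^∨` and `L → N^∨` are surjective. The kernel of
`x ↦ (B x)|_M mod M` is `M + N`. As `M` is nondegenerate, `M ⊕ N` has finite index in `L`; this
makes `N` nondegenerate and gives `N^⊥ = M`, so `x ↦ (B x)|_N mod N` has the same kernel `N + M`.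
Two surjections out of `L` with the same kernel differ by an isomorphism of their targets.
-/

/-- For a bilinear form `B` on `L` and a submodule `M ≤ L`, the linear map sending
`x ∈ L` to the functional `m ↦ B x m` on `M` (the "projection to `M^∨`"). -/
def restrDual {L : Type*} [AddCommGroup L] [Module ℤ L]
    (B : L →ₗ[ℤ] L →ₗ[ℤ] ℤ) (M : Submodule ℤ L) : L →ₗ[ℤ] (M →ₗ[ℤ] ℤ) where
  toFun x := (B x).domRestrict M
  map_add' x y := by ext m; simp
  map_smul' c x := by ext m; simp

open LinearMap (BilinForm ker range)

namespace Submodule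

variable {R L : Type*} [AddCommGroup L]

theorem isTorsionFree_quotient_of_smul_mem [Ring R] [Nontrivial R] [Module R L]
    {M : Submodule R L} (hM : ∀ (x : L) (k : R), k ≠ 0 → k • x ∈ M → x ∈ M) :
    Module.IsTorsionFree R (L ⧸ M) := by
  refine .of_smul_eq_zero fun k q hkq => or_iff_not_imp_left.2 fun hk => ?_
  induction q using Submodule.Quotient.induction_on with
  | H x =>
    rw [← Submodule.Quotient.mk_smul, Submodule.Quotient.mk_eq_zero] at hkq
    exact (Submodule.Quotient.mk_eq_zero M).2 (hM x k hk hkq)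

theorem exists_retraction_of_projective_quotient [Ring R] [Module R L] (M : Submodule R L)
    [Module.Projective R (L ⧸ M)] : ∃ r : L →ₗ[R] M, r ∘ₗ M.subtype = .id := by
  have hsplit := (LinearMap.exact_subtype_mkQ M).split_tfae M.injective_subtype M.mkQ_surjective
  exact (hsplit.out 0 1).1 (M.mkQ.exists_rightInverse_of_surjective M.range_mkQ)

theorem dualMap_subtype_surjective [CommRing R] [IsDomain R] [IsPrincipalIdealRing R]
    [Module R L] [Module.Finite R L] (M : Submodule R L) [Module.IsTorsionFree R (L ⧸ M)] :
    Function.Surjective M.subtype.dualMap := by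
  obtain ⟨r, hr⟩ := M.exists_retraction_of_projective_quotient
  refine LinearMap.surjective_of_comp_eq_id r.dualMap _ ?_
  rw [LinearMap.dualMap_comp_dualMap, hr, LinearMap.dualMap_id]

end Submodule

theorem LinearMap.exists_smul_mem_range_of_injective {R V W : Type*} [CommRing R] [IsDomain R]
    [AddCommGroup V] [Module R V] [AddCommGroup W] [Module R W] [Module.Finite R W]
    {f : V →ₗ[R] W} (hf : Function.Injective f) (hrank : Module.finrank R V = Module.finrank R W)
    (w : W) : ∃ k : R, k ≠ 0 ∧ k • w ∈ range f := by
  have hrange := (range f).finrank_quotient_add_finrank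
  rw [LinearMap.finrank_range_of_inj hf, hrank, Nat.add_eq_right,
    Module.finrank_eq_zero_iff_isTorsion] at hrange
  obtain ⟨⟨k, hk⟩, hkw⟩ := @hrange (Submodule.Quotient.mk w)
  refine ⟨k, nonZeroDivisors.ne_zero hk, ?_⟩
  rwa [Submonoid.mk_smul, ← Submodule.Quotient.mk_smul, Submodule.Quotient.mk_eq_zero] at hkw

theorem LinearMap.exists_linearEquiv_comp_eq_of_ker_eq {R L P Q : Type*} [Ring R]
    [AddCommGroup L] [Module R L] [AddCommGroup P] [Module R P] [AddCommGroup Q] [Module R Q]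
    {f : L →ₗ[R] P} {g : L →ₗ[R] Q} (hf : Function.Surjective f) (hg : Function.Surjective g)
    (hker : ker f = ker g) : ∃ ψ : P ≃ₗ[R] Q, ∀ x, g x = ψ (f x) :=
  ⟨(f.quotKerEquivOfSurjective hf).symm ≪≫ₗ Submodule.quotEquivOfEq _ _ hker ≪≫ₗ
    g.quotKerEquivOfSurjective hg, fun x => by
      simp [LinearMap.quotKerEquivOfSurjective_symm_apply]⟩

namespace LinearMap.BilinForm

variable {R L : Type*} [CommRing R] [AddCommGroup L] [Module R L] {B : BilinForm R L}

theorem ker_domRestrict₂ (hB : B.IsRefl) (M : Submodule R L) :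
    ker (B.domRestrict₂ M) = B.orthogonal M := by
  ext x
  simp only [LinearMap.mem_ker, mem_orthogonal_iff, LinearMap.ext_iff, domRestrict₂_apply,
    LinearMap.zero_apply, Subtype.forall]
  exact forall₂_congr fun m _ => ⟨hB x m, hB m x⟩

theorem mem_orthogonal_of_smul_mem [IsDomain R] {M : Submodule R L} {x : L} {k : R} (hk : k ≠ 0)
    (hkx : k • x ∈ B.orthogonal M) : x ∈ B.orthogonal M := by
  rw [mem_orthogonal_iff] at hkx ⊢
  intro m hm
  simpa [hk] using hkx m hm

/-- The map `L → M^∨ / M`, `x ↦ (B x)|_M mod M`, where `M` sits in `M^∨` via `B`. -/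
def discriminantProj (B : BilinForm R L) (M : Submodule R L) :
    L →ₗ[R] Module.Dual R M ⧸ M.map (B.domRestrict₂ M) :=
  (M.map (B.domRestrict₂ M)).mkQ ∘ₗ B.domRestrict₂ M

theorem ker_discriminantProj (hB : B.IsRefl) (M : Submodule R L) :
    ker (discriminantProj B M) = M ⊔ B.orthogonal M := by
  rw [discriminantProj, LinearMap.ker_comp, Submodule.ker_mkQ, Submodule.comap_map_eq,
    ker_domRestrict₂ hB]

theorem discriminantProj_surjective [IsDomain R] [IsPrincipalIdealRing R] [Module.Finite R L]
    (hB : Function.Surjective B) (M : Submodule R L) [Module.IsTorsionFree R (L ⧸ M)] :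
    Function.Surjective (discriminantProj B M) :=
  (Submodule.mkQ_surjective _).comp (M.dualMap_subtype_surjective.comp hB)

section Lattice

variable [IsDomain R] [IsPrincipalIdealRing R] [Module.Free R L] [Module.Finite R L]
  {M : Submodule R L}

theorem exists_smul_mem_sup_orthogonal (hB : B.IsRefl) (hM : (B.restrict M).SeparatingLeft)
    (x : L) : ∃ k : R, k ≠ 0 ∧ k • x ∈ M ⊔ B.orthogonal M := by
  have hrank : Module.finrank R M = Module.finrank R (Module.Dual R M) :=
    (Module.Free.chooseBasis R M).toDualEquiv.finrank_eq
  obtain ⟨k, hk, m, hm⟩ := LinearMap.exists_smul_mem_range_of_injective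
    (LinearMap.ker_eq_bot.1 (LinearMap.separatingLeft_iff_ker_eq_bot.1 hM)) hrank
    (B.domRestrict₂ M x)
  refine ⟨k, hk, Submodule.mem_sup.2 ⟨m, m.2, k • x - m, ?_, add_sub_cancel _ _⟩⟩
  rw [← ker_domRestrict₂ hB, LinearMap.mem_ker, map_sub, map_smul, ← hm]
  exact sub_eq_zero.2 rfl

theorem separatingLeft_restrict_orthogonal (hB : B.IsRefl) (hsep : B.SeparatingLeft)
    (hM : (B.restrict M).SeparatingLeft) : (B.restrict (B.orthogonal M)).SeparatingLeft := by
  rintro ⟨n, hnM⟩ hn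
  refine Subtype.ext (hsep n fun y => ?_)
  obtain ⟨k, hk, hky⟩ := exists_smul_mem_sup_orthogonal hB hM y
  obtain ⟨m, hm, n', hn', hmn'⟩ := Submodule.mem_sup.1 hky
  have hkn : k * B n y = 0 := by
    rw [← smul_eq_mul, ← map_smul, ← hmn', map_add, hB m n (hnM m hm), zero_add]
    exact hn ⟨n', hn'⟩
  exact (mul_eq_zero.1 hkn).resolve_left hk

theorem orthogonal_orthogonal_of_isTorsionFree (hB : B.IsRefl) (hsep : B.SeparatingLeft)
    (hM : (B.restrict M).SeparatingLeft) [Module.IsTorsionFree R (L ⧸ M)] :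
    B.orthogonal (B.orthogonal M) = M := by
  refine le_antisymm (fun x hx => ?_) (le_orthogonal_orthogonal hB)
  obtain ⟨k, hk, hkx⟩ := exists_smul_mem_sup_orthogonal hB hM x
  obtain ⟨m, hm, n, hn, hmn⟩ := Submodule.mem_sup.1 hkx
  have hn' : n ∈ B.orthogonal (B.orthogonal M) := by
    rw [← add_sub_cancel_left m n, hmn]
    exact sub_mem (Submodule.smul_mem _ k hx) (le_orthogonal_orthogonal hB hm)
  have hn0 : n = 0 := congrArg Subtype.val
    (separatingLeft_restrict_orthogonal hB hsep hM ⟨n, hn⟩ fun n' => hB _ _ (hn' n' n'.2))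
  have hkx : k • M.mkQ x = 0 := by
    rw [← map_smul, ← hmn, hn0, add_zero, Submodule.mkQ_apply, Submodule.Quotient.mk_eq_zero]
    exact hm
  simpa [hk] using hkx

end Lattice

end LinearMap.BilinForm

open LinearMap.BilinForm in
/-- Let `L` be an even unimodular lattice, `M ⊂ L` a primitive sublattice with
nondegenerate restricted form, and `N = M^⊥`. Identifying `M^∨` with `Hom(M, ℤ)`
(legitimate since `M` is nondegenerate), the image of `L` in `M^∨/M × N^∨/N` under
`x ↦ (B x|_M mod M, B x|_N mod N)` is the graph of a group isomorphism
`M^∨/M ≅ N^∨/N`. -/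
theorem image_of_unimodular_overlattice_is_graph_of_isomorphism
    (L : Type*) [AddCommGroup L] [Module ℤ L] [Module.Free ℤ L] [Module.Finite ℤ L]
    (B : L →ₗ[ℤ] L →ₗ[ℤ] ℤ)
    (hsymm : ∀ x y : L, B x y = B y x)
    (hunimod : ∀ φ : L →ₗ[ℤ] ℤ, ∃! x : L, ∀ y : L, φ y = B x y)
    (M : Submodule ℤ L)
    (hprim : ∀ (x : L) (k : ℤ), k ≠ 0 → k • x ∈ M → x ∈ M)
    (hMnd : ∀ m : M, (∀ m' : M, B m m' = 0) → m = 0)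
    (N : Submodule ℤ L) (hN : N = (LinearMap.BilinForm.orthogonal B M)) :
    ∃ ψ : ((M →ₗ[ℤ] ℤ) ⧸ M.map (restrDual B M)) ≃+
          ((N →ₗ[ℤ] ℤ) ⧸ N.map (restrDual B N)),
      (∀ x : L,
        Submodule.Quotient.mk (restrDual B N x) =
          ψ (Submodule.Quotient.mk (restrDual B M x))) ∧
      Function.Surjective
        (fun x : L =>
          (Submodule.Quotient.mk (restrDual B M x) :
            (M →ₗ[ℤ] ℤ) ⧸ M.map (restrDual B M))) := by
  subst hN
  -- The statement's `M →ₗ[ℤ] ℤ` uses `AddCommGroup.toIntModule M`, which agrees definitionally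
  -- with `M.module` only once `L` carries the canonical `ℤ`-module structure.
  obtain rfl : ‹Module ℤ L› = AddCommGroup.toIntModule L := Subsingleton.elim _ _
  have hrefl : IsRefl B := (isSymm_def.2 hsymm).isRefl
  have hbij : Function.Bijective B := (Function.bijective_iff_existsUnique B).2 fun φ =>
    (hunimod φ).imp fun x => by simp [LinearMap.ext_iff, eq_comm]
  have := Submodule.isTorsionFree_quotient_of_smul_mem hprim
  have := Submodule.isTorsionFree_quotient_of_smul_mem (M := orthogonal B M)
    fun _ _ hk => mem_orthogonal_of_smul_mem hk
  have hM : (restrict B M).SeparatingLeft := hMnd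
  have hsep : B.SeparatingLeft :=
    LinearMap.separatingLeft_iff_ker_eq_bot.2 (LinearMap.ker_eq_bot.2 hbij.1)
  obtain ⟨ψ, hψ⟩ := LinearMap.exists_linearEquiv_comp_eq_of_ker_eq
    (discriminantProj_surjective hbij.2 M) (discriminantProj_surjective hbij.2 (orthogonal B M))
    (by rw [ker_discriminantProj hrefl, ker_discriminantProj hrefl,
      orthogonal_orthogonal_of_isTorsionFree hrefl hsep hM, sup_comm])
  exact ⟨ψ.toAddEquiv, hψ, discriminantProj_surjective hbij.2 M⟩
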